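/- (Bound on the shifted-contour integral of the kernel, Lemma) For every c > 0 and γ > 0 with c·γ² ≥ 1, (1/√(2π))·∫_{ℝ} |f̂₂(k − i·2cγ²; γ, c)| dk ≤ e^c·erfc(1/(2γ))·e^{−c²γ²} ≤ e^{c − c²γ²}. -/

import Mathlib

open MeasureTheory Complex
open scoped Real

noncomputable section

/-- The complementary error function `erfc(x) = (2/√π) ∫_x^∞ e^{-y²} dy`. -/
def erfc (x : ℝ) : ℝ := (2 / Real.sqrt Real.pi) * ∫ y in Set.Ioi x, Real.exp (-y ^ 2)

/-- The kernel function `f̂₂(z;γ,c) = √(2/π) · e^{c(1-iz)}/(1+z²) · e^{-(z²+1)/(4γ²)}`. -/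
def fhat₂ (γ c : ℝ) (z : ℂ) : ℂ :=
  (Real.sqrt (2 / Real.pi) : ℂ) * Complex.exp ((c : ℂ) * (1 - Complex.I * z)) / (1 + z ^ 2) *
    Complex.exp (-((z ^ 2 + 1) / (4 * (γ : ℂ) ^ 2)))

namespace ShiftedContourAux

open Set

lemma exp_decay_int (b : ℝ) (hb : 0 < b) :
    ∫ u in Ioi (0:ℝ), Real.exp (-(b * u)) = b⁻¹ := by
  have := integral_comp_mul_left_Ioi (fun u => Real.exp (-u)) 0 hb
  simp only [mul_zero, integral_exp_neg_Ioi, neg_zero, Real.exp_zero, smul_eq_mul,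
    mul_one] at this
  exact this

lemma int_aux (x : ℝ) : Integrable fun k : ℝ => Real.exp (-(x ^ 2 * k ^ 2)) / (1 + k ^ 2) := by
  have hcont2 : Continuous fun k : ℝ => Real.exp (-(x ^ 2 * k ^ 2)) / (1 + k ^ 2) :=
    Continuous.div (by fun_prop) (by fun_prop) (fun k => by positivity)
  apply Integrable.mono' integrable_inv_one_add_sq hcont2.aestronglyMeasurable
  filter_upwards with k
  have h1 : (0:ℝ) < 1 + k ^ 2 := by positivity
  rw [Real.norm_eq_abs, _root_.abs_of_nonneg (by positivity), ← one_div]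
  gcongr
  exact Real.exp_le_one_iff.mpr (by nlinarith [sq_nonneg (x * k)])

lemma key (x : ℝ) (hx : 0 < x) :
    ∫ k : ℝ, Real.exp (-(x ^ 2 * k ^ 2)) / (1 + k ^ 2)
      = Real.pi * Real.exp (x ^ 2) * erfc x := by
  set F : ℝ → ℝ → ℝ := fun k u => Real.exp (-((x ^ 2 + u) * k ^ 2) - u) with hF
  have hcont : Continuous (Function.uncurry F) := by
    apply Real.continuous_exp.comp; fun_prop
  have hFeq : ∀ k u, F k u = Real.exp (-(x ^ 2 * k ^ 2)) * Real.exp (-((1 + k ^ 2) * u)) := by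
    intro k u
    rw [hF, ← Real.exp_add]
    ring_nf
  have hinner : ∀ k : ℝ, (∫ u in Ioi (0:ℝ), F k u)
      = Real.exp (-(x ^ 2 * k ^ 2)) / (1 + k ^ 2) := by
    intro k
    have h1 : (0:ℝ) < 1 + k ^ 2 := by positivity
    simp only [hFeq]
    rw [integral_const_mul, exp_decay_int _ h1, div_eq_mul_inv]
  have hFkint : ∀ k : ℝ, IntegrableOn (F k) (Ioi (0:ℝ)) := by
    intro k
    have h1 : (0:ℝ) < 1 + k ^ 2 := by positivity
    have h2 : IntegrableOn
        (fun u => Real.exp (-(x ^ 2 * k ^ 2)) * Real.exp (-((1 + k ^ 2) * u)))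
        (Ioi (0:ℝ)) := by
      have h3 : IntegrableOn
          (fun u : ℝ => Real.exp (-(x ^ 2 * k ^ 2)) * Real.exp (-(1 + k ^ 2) * u))
          (Ioi (0:ℝ)) :=
        (exp_neg_integrableOn_Ioi (0:ℝ) h1).const_mul (Real.exp (-(x ^ 2 * k ^ 2)))
      refine h3.congr_fun (fun u _ => ?_) measurableSet_Ioi
      simp only [neg_mul]
    exact h2.congr_fun (fun u _ => (hFeq k u).symm) measurableSet_Ioi
  have hprod : Integrable (Function.uncurry F)
      (volume.prod (volume.restrict (Ioi (0:ℝ)))) := by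
    rw [integrable_prod_iff hcont.aestronglyMeasurable]
    refine ⟨Filter.Eventually.of_forall fun k => hFkint k, ?_⟩
    have heq : (fun k => ∫ u in Ioi (0:ℝ), ‖F k u‖)
        = fun k => Real.exp (-(x ^ 2 * k ^ 2)) / (1 + k ^ 2) := by
      funext k
      rw [← hinner k]
      congr 1
      funext u
      rw [Real.norm_eq_abs, _root_.abs_of_nonneg (Real.exp_pos _).le]
    simp only [Function.uncurry_apply_pair]
    rw [heq]
    exact int_aux x
  have himg : (fun v : ℝ => v ^ 2 - x ^ 2) '' Ioi x = Ioi (0:ℝ) := by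
    ext u
    constructor
    · rintro ⟨v, hv, rfl⟩
      rw [mem_Ioi] at hv
      show (0:ℝ) < v ^ 2 - x ^ 2
      have h1 : (0:ℝ) < v - x := by linarith
      have h2 : (0:ℝ) < v + x := by linarith
      nlinarith [mul_pos h1 h2]
    · intro hu
      rw [mem_Ioi] at hu
      refine ⟨Real.sqrt (x ^ 2 + u), ?_, ?_⟩
      · rw [mem_Ioi]
        have : x = Real.sqrt (x ^ 2) := (Real.sqrt_sq hx.le).symm
        nth_rewrite 1 [this]
        exact Real.sqrt_lt_sqrt (by positivity) (by linarith)
      · show Real.sqrt (x ^ 2 + u) ^ 2 - x ^ 2 = u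
        rw [Real.sq_sqrt (by positivity)]
        ring
  calc ∫ k : ℝ, Real.exp (-(x ^ 2 * k ^ 2)) / (1 + k ^ 2)
      = ∫ k : ℝ, ∫ u in Ioi (0:ℝ), F k u := by simp_rw [hinner]
    _ = ∫ u in Ioi (0:ℝ), ∫ k : ℝ, F k u := integral_integral_swap hprod
    _ = ∫ u in Ioi (0:ℝ), Real.exp (-u) * Real.sqrt (Real.pi / (x ^ 2 + u)) := by
        refine setIntegral_congr_fun measurableSet_Ioi fun u hu => ?_
        have h2 : ∀ k : ℝ, F k u = Real.exp (-u) * Real.exp (-(x ^ 2 + u) * k ^ 2) := by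
          intro k
          rw [hF, ← Real.exp_add]
          ring_nf
        rw [show (fun k => F k u) = fun k => Real.exp (-u) * Real.exp (-(x ^ 2 + u) * k ^ 2)
          from funext h2]
        rw [integral_const_mul, integral_gaussian]
    _ = ∫ v in Ioi x, |2 * v| • (Real.exp (-(v ^ 2 - x ^ 2)) *
          Real.sqrt (Real.pi / (x ^ 2 + (v ^ 2 - x ^ 2)))) := by
        rw [← himg]
        refine integral_image_eq_integral_abs_deriv_smul measurableSet_Ioi
          (fun v _ => ?_) (fun a ha b hb hab => ?_) _
        · have : HasDerivAt (fun v : ℝ => v ^ 2 - x ^ 2) (2 * v) v := by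
            simpa using ((hasDerivAt_pow 2 v).sub_const (x ^ 2))
          exact this.hasDerivWithinAt
        · rw [mem_Ioi] at ha hb
          have hab' : a ^ 2 - x ^ 2 = b ^ 2 - x ^ 2 := hab
          have h2 : a ^ 2 = b ^ 2 := by linarith
          rcases sq_eq_sq_iff_eq_or_eq_neg.mp h2 with h | h
          · exact h
          · linarith
    _ = ∫ v in Ioi x, (2 * Real.sqrt Real.pi * Real.exp (x ^ 2)) * Real.exp (-v ^ 2) := by
        refine setIntegral_congr_fun measurableSet_Ioi fun v hv => ?_
        rw [mem_Ioi] at hv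
        have hv0 : 0 < v := lt_trans hx hv
        have h1 : x ^ 2 + (v ^ 2 - x ^ 2) = v ^ 2 := by ring
        rw [h1, smul_eq_mul, abs_of_pos (by positivity),
          Real.sqrt_div Real.pi_pos.le, Real.sqrt_sq hv0.le,
          show -(v ^ 2 - x ^ 2) = x ^ 2 + -v ^ 2 by ring, Real.exp_add]
        field_simp
    _ = Real.pi * Real.exp (x ^ 2) * erfc x := by
        rw [integral_const_mul, erfc]
        have hπ : Real.sqrt Real.pi ≠ 0 := by positivity
        have hs : Real.sqrt Real.pi * Real.sqrt Real.pi = Real.pi :=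
          Real.mul_self_sqrt Real.pi_pos.le
        field_simp
        linear_combination (∫ a in Ioi x, Real.exp (-a ^ 2)) * hs

lemma erfc_nonneg (x : ℝ) : 0 ≤ erfc x :=
  mul_nonneg (by positivity) (integral_nonneg fun y => (Real.exp_pos _).le)

lemma erfc_le_one {x : ℝ} (hx : 0 ≤ x) : erfc x ≤ 1 := by
  have hint : IntegrableOn (fun y : ℝ => Real.exp (-y ^ 2)) (Ioi 0) := by
    have := (integrable_exp_neg_mul_sq (by norm_num : (0:ℝ) < 1)).integrableOn (s := Ioi 0)
    simpa using this
  have hmono : (∫ y in Ioi x, Real.exp (-y ^ 2)) ≤ ∫ y in Ioi (0:ℝ), Real.exp (-y ^ 2) :=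
    setIntegral_mono_set hint (Filter.Eventually.of_forall fun y => (Real.exp_pos _).le)
      (HasSubset.Subset.eventuallyLE (Ioi_subset_Ioi hx))
  have hval : (∫ y in Ioi (0:ℝ), Real.exp (-y ^ 2)) = Real.sqrt Real.pi / 2 := by
    have := integral_gaussian_Ioi 1
    simpa using this
  have hπ : (0:ℝ) < Real.sqrt Real.pi := by positivity
  rw [erfc]
  calc (2 / Real.sqrt Real.pi) * ∫ y in Ioi x, Real.exp (-y ^ 2)
      ≤ (2 / Real.sqrt Real.pi) * (Real.sqrt Real.pi / 2) :=
        mul_le_mul_of_nonneg_left (hmono.trans_eq hval) (by positivity)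
    _ = 1 := by field_simp

end ShiftedContourAux

open ShiftedContourAux Set

/-- **Bound on the shifted-contour integral of the kernel (Lemma).** -/
theorem shifted_contour_bound (c γ : ℝ) (hc : 0 < c) (hγ : 0 < γ) (hcγ : 1 ≤ c * γ ^ 2) :
    (Real.sqrt (2 * Real.pi))⁻¹ *
        (∫ k : ℝ, ‖fhat₂ γ c ((k : ℂ) - Complex.I * (2 * c * γ ^ 2))‖) ≤
      Real.exp c * erfc (1 / (2 * γ)) * Real.exp (-(c ^ 2 * γ ^ 2)) ∧
    Real.exp c * erfc (1 / (2 * γ)) * Real.exp (-(c ^ 2 * γ ^ 2)) ≤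
      Real.exp (c - c ^ 2 * γ ^ 2) := by
  have hγ' : γ ≠ 0 := hγ.ne'
  set a : ℝ := 2 * c * γ ^ 2 with ha
  have ha2 : 2 ≤ a := by rw [ha]; nlinarith
  set x : ℝ := 1 / (2 * γ) with hxdef
  have hx : 0 < x := by rw [hxdef]; positivity
  have hx2 : x ^ 2 = 1 / (4 * γ ^ 2) := by rw [hxdef]; field_simp; ring
  constructor
  · -- main bound
    have hpt : ∀ k : ℝ, ‖fhat₂ γ c ((k : ℂ) - Complex.I * (2 * c * γ ^ 2))‖
        ≤ (Real.sqrt (2 / Real.pi) * Real.exp (c - c ^ 2 * γ ^ 2 - x ^ 2)) *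
          (Real.exp (-(x ^ 2 * k ^ 2)) / (1 + k ^ 2)) := by
      intro k
      set z : ℂ := (k : ℂ) - Complex.I * (2 * c * γ ^ 2) with hz
      have hza : z = (k : ℂ) - Complex.I * ((a : ℝ) : ℂ) := by
        rw [hz, ha]; push_cast; ring
      have hzre : z.re = k := by rw [hza]; simp
      have hzim : z.im = -a := by rw [hza]; simp
      have habs1 : ‖Complex.exp ((c : ℂ) * (1 - Complex.I * z))‖
          = Real.exp (c * (1 - a)) := by
        rw [Complex.norm_exp]
        congr 1
        rw [Complex.mul_re, Complex.sub_re, Complex.sub_im, Complex.mul_re, Complex.mul_im]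
        simp [hzre, hzim]
      have hz2re : (z ^ 2).re = k ^ 2 - a ^ 2 := by
        rw [sq, Complex.mul_re, hzre, hzim]; ring
      have hz2im : (z ^ 2).im = -(2 * a * k) := by
        rw [sq, Complex.mul_im, hzre, hzim]; ring
      have h4γ : (4 : ℂ) * (γ : ℂ) ^ 2 = ((4 * γ ^ 2 : ℝ) : ℂ) := by push_cast; ring
      have habs2 : ‖Complex.exp (-((z ^ 2 + 1) / (4 * (γ : ℂ) ^ 2)))‖
          = Real.exp ((a ^ 2 - 1 - k ^ 2) / (4 * γ ^ 2)) := by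
        rw [Complex.norm_exp]
        congr 1
        rw [h4γ, Complex.neg_re, Complex.div_ofReal_re, Complex.add_re, hz2re, Complex.one_re]
        field_simp
        ring
      have hden : (1 + k ^ 2 : ℝ) ≤ ‖1 + z ^ 2‖ := by
        have h3 : (1 + k ^ 2) ^ 2 ≤ ‖1 + z ^ 2‖ ^ 2 := by
          rw [Complex.sq_norm, Complex.normSq_apply, Complex.add_re, Complex.add_im,
            Complex.one_re, Complex.one_im, hz2re, hz2im]
          have ha4 : 4 ≤ a ^ 2 := by nlinarith
          nlinarith [sq_nonneg (a * k), sq_nonneg a,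
            mul_nonneg (sq_nonneg a) (sub_nonneg.mpr ha4)]
        nlinarith [norm_nonneg (1 + z ^ 2), sq_nonneg k]
      have hexp : Real.exp (c * (1 - a)) * Real.exp ((a ^ 2 - 1 - k ^ 2) / (4 * γ ^ 2))
          = Real.exp (c - c ^ 2 * γ ^ 2 - x ^ 2) * Real.exp (-(x ^ 2 * k ^ 2)) := by
        rw [← Real.exp_add, ← Real.exp_add]
        congr 1
        rw [hx2, ha]
        field_simp
        ring
      have hk1 : (0:ℝ) < 1 + k ^ 2 := by positivity
      calc ‖fhat₂ γ c z‖
          = Real.sqrt (2 / Real.pi) *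
              (Real.exp (c * (1 - a)) * Real.exp ((a ^ 2 - 1 - k ^ 2) / (4 * γ ^ 2))) /
              ‖1 + z ^ 2‖ := by
            rw [fhat₂, norm_mul, norm_div, norm_mul, habs1, habs2, Complex.norm_real, Real.norm_eq_abs,
              _root_.abs_of_nonneg (Real.sqrt_nonneg _)]
            ring
        _ ≤ Real.sqrt (2 / Real.pi) *
              (Real.exp (c * (1 - a)) * Real.exp ((a ^ 2 - 1 - k ^ 2) / (4 * γ ^ 2))) /
              (1 + k ^ 2) := by
            gcongr
        _ = (Real.sqrt (2 / Real.pi) * Real.exp (c - c ^ 2 * γ ^ 2 - x ^ 2)) *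
              (Real.exp (-(x ^ 2 * k ^ 2)) / (1 + k ^ 2)) := by
            rw [hexp]; ring
    have hgi : Integrable fun k : ℝ =>
        (Real.sqrt (2 / Real.pi) * Real.exp (c - c ^ 2 * γ ^ 2 - x ^ 2)) *
          (Real.exp (-(x ^ 2 * k ^ 2)) / (1 + k ^ 2)) := (int_aux x).const_mul _
    have hmono := integral_mono_of_nonneg
      (Filter.Eventually.of_forall fun k => norm_nonneg _) hgi
      (Filter.Eventually.of_forall hpt)
    have hintval : (∫ k : ℝ,
        (Real.sqrt (2 / Real.pi) * Real.exp (c - c ^ 2 * γ ^ 2 - x ^ 2)) *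
          (Real.exp (-(x ^ 2 * k ^ 2)) / (1 + k ^ 2)))
        = (Real.sqrt (2 / Real.pi) * Real.exp (c - c ^ 2 * γ ^ 2 - x ^ 2)) *
          (Real.pi * Real.exp (x ^ 2) * erfc x) := by
      rw [integral_const_mul, key x hx]
    have h2π : (0:ℝ) < Real.sqrt (2 * Real.pi) := by positivity
    have hs : Real.sqrt (2 / Real.pi) * Real.pi = Real.sqrt (2 * Real.pi) := by
      rw [show (2:ℝ) * Real.pi = (2 / Real.pi) * Real.pi ^ 2 by field_simp,
        Real.sqrt_mul (by positivity), Real.sqrt_sq Real.pi_pos.le]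
    have hone : (Real.sqrt (2 * Real.pi))⁻¹ * (Real.sqrt (2 / Real.pi) * Real.pi) = 1 := by
      rw [hs]; exact inv_mul_cancel₀ h2π.ne'
    have hexps : Real.exp (c - c ^ 2 * γ ^ 2 - x ^ 2) * Real.exp (x ^ 2)
        = Real.exp c * Real.exp (-(c ^ 2 * γ ^ 2)) := by
      rw [← Real.exp_add, ← Real.exp_add]
      ring_nf
    calc (Real.sqrt (2 * Real.pi))⁻¹ *
          (∫ k : ℝ, ‖fhat₂ γ c ((k : ℂ) - Complex.I * (2 * c * γ ^ 2))‖)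
        ≤ (Real.sqrt (2 * Real.pi))⁻¹ *
          ((Real.sqrt (2 / Real.pi) * Real.exp (c - c ^ 2 * γ ^ 2 - x ^ 2)) *
            (Real.pi * Real.exp (x ^ 2) * erfc x)) := by
          rw [← hintval]
          exact mul_le_mul_of_nonneg_left hmono (by positivity)
      _ = ((Real.sqrt (2 * Real.pi))⁻¹ * (Real.sqrt (2 / Real.pi) * Real.pi)) *
            ((Real.exp (c - c ^ 2 * γ ^ 2 - x ^ 2) * Real.exp (x ^ 2)) * erfc x) := by ring
      _ = 1 * ((Real.exp c * Real.exp (-(c ^ 2 * γ ^ 2))) * erfc x) := by rw [hone, hexps]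
      _ = Real.exp c * erfc x * Real.exp (-(c ^ 2 * γ ^ 2)) := by ring
  · -- trivial bound
    have h1 : erfc x ≤ 1 := erfc_le_one hx.le
    have h0 : 0 ≤ erfc x := erfc_nonneg x
    calc Real.exp c * erfc x * Real.exp (-(c ^ 2 * γ ^ 2))
        ≤ Real.exp c * 1 * Real.exp (-(c ^ 2 * γ ^ 2)) := by gcongr
      _ = Real.exp (c - c ^ 2 * γ ^ 2) := by
          rw [mul_one, ← Real.exp_add]
          ring_nf
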